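/- Under the diminishing learning-rate assumptions, lim_{K→∞} ((CX̄^K)_max − (1/A_K) ∑_{k=0}^K α_k X^k·CX^k) = 0. -/

import Mathlib

open Filter Topology Finset Matrix

noncomputable section

/-- Membership in the probability simplex Δ ⊆ ℝ^n. -/
def isSimplex {n : ℕ} (X : Fin n → ℝ) : Prop :=
  (∀ i, 0 ≤ X i) ∧ ∑ i, X i = 1

/-- Interior point of the probability simplex. -/
def isInteriorPt {n : ℕ} (X : Fin n → ℝ) : Prop :=
  (∀ i, 0 < X i) ∧ ∑ i, X i = 1

/-- The Hedge map T_α. -/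
noncomputable def hedge {n : ℕ} (C : Matrix (Fin n) (Fin n) ℝ) (a : ℝ) (X : Fin n → ℝ) :
    Fin n → ℝ :=
  fun i => X i * Real.exp (a * C.mulVec X i) / ∑ j, X j * Real.exp (a * C.mulVec X j)

/-- Hedge iterates: X^0 = X0, X^{k+1} = T_{α_k}(X^k). -/
noncomputable def hiter {n : ℕ} (C : Matrix (Fin n) (Fin n) ℝ) (a : ℕ → ℝ) (X0 : Fin n → ℝ) :
    ℕ → Fin n → ℝ
  | 0 => X0
  | k + 1 => hedge C (a k) (hiter C a X0 k)

/-- A_K = ∑_{k=0}^K α_k. -/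
noncomputable def pSum (a : ℕ → ℝ) (K : ℕ) : ℝ := ∑ k ∈ Finset.range (K + 1), a k

/-- Weighted empirical average X̄^K = (1/A_K) ∑_{k=0}^K α_k X^k. -/
noncomputable def wavg {n : ℕ} (C : Matrix (Fin n) (Fin n) ℝ) (a : ℕ → ℝ) (X0 : Fin n → ℝ)
    (K : ℕ) : Fin n → ℝ :=
  (pSum a K)⁻¹ • ∑ k ∈ Finset.range (K + 1), a k • hiter C a X0 k

/-- Relative entropy RE(Y, X) = ∑_{i : Y(i) > 0} Y(i) ln(Y(i)/X(i)). -/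
noncomputable def RE {n : ℕ} (Y X : Fin n → ℝ) : ℝ :=
  ∑ i ∈ Finset.univ.filter (fun i => 0 < Y i), Y i * Real.log (Y i / X i)

/-- (CX)_max = max_i (CX)_i. -/
noncomputable def cmax {n : ℕ} (C : Matrix (Fin n) (Fin n) ℝ) (X : Fin n → ℝ) : ℝ :=
  ⨆ i, C.mulVec X i

/-- X̄ is a limit point of the sequence of weighted empirical averages. -/
def isLimitPoint {n : ℕ} (C : Matrix (Fin n) (Fin n) ℝ) (a : ℕ → ℝ) (X0 : Fin n → ℝ)
    (Xb : Fin n → ℝ) : Prop :=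
  ∃ φ : ℕ → ℕ, StrictMono φ ∧ Tendsto (fun j => wavg C a X0 (φ j)) atTop (𝓝 Xb)

/-
Write `u^k = C X^k` and let `Z_k = ∑ᵢ X^k(i) exp(α_k u^k_i)` be the normaliser of the k-th Hedge
step. Taking logarithms in `X^{K+1}(i) = X^0(i) exp(∑_{k ≤ K} α_k u^k_i) / ∏_{k ≤ K} Z_k` gives
`A_K (C X̄^K)_i = ∑_{k ≤ K} log Z_k + log X^{K+1}(i) - log X^0(i)`. As `log X^{K+1}(i) ≤ 0`, and
`X^{K+1}(i) ≥ X^0(i)` for some `i` (both are probability vectors), `A_K (C X̄^K)_max` lies between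
`∑ log Z_k` and `∑ log Z_k - ∑ᵢ log X^0(i)`. By Jensen `α_k X^k·u^k ≤ log Z_k`, and since `u^k`
takes values in `[0, M]`, the chord bound for `exp` gives
`log Z_k ≤ α_k X^k·u^k + (exp(α_k M) - 1 - α_k M)`, an error that is summable under the
learning-rate assumptions. So `A_K` times the quantity of the theorem stays between `0` and a
constant, while `A_K → ∞`.
-/

open Real

lemma exp_mul_le_one_add_mul_exp_sub_one {s : ℝ} (hs₀ : 0 ≤ s) (hs₁ : s ≤ 1) (b : ℝ) :
    exp (s * b) ≤ 1 + s * (exp b - 1) := by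
  have h := convexOn_exp.2 (Set.mem_univ 0) (Set.mem_univ b) (sub_nonneg.2 hs₁) hs₀ (by ring)
  simp only [smul_eq_mul, mul_zero, zero_add, exp_zero, mul_one] at h
  linarith

section ProbabilityVector

variable {ι : Type*} [Fintype ι] {X : ι → ℝ} (hX : ∀ i, 0 ≤ X i) (hX₁ : ∑ i, X i = 1)
include hX hX₁

lemma exp_mul_dotProduct_le_sum_mul_exp (t : ℝ) (u : ι → ℝ) :
    exp (t * (X ⬝ᵥ u)) ≤ ∑ i, X i * exp (t * u i) := by
  have h := convexOn_exp.map_sum_le (t := univ) (w := X) (p := fun i => t * u i)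
    (fun i _ => hX i) hX₁ (fun i _ => Set.mem_univ _)
  simp only [smul_eq_mul] at h
  have hdot : t * (X ⬝ᵥ u) = ∑ i, X i * (t * u i) := by
    simp only [dotProduct, mul_sum]
    exact sum_congr rfl fun i _ => by ring
  rwa [hdot]

lemma sum_mul_exp_pos (t : ℝ) (u : ι → ℝ) : 0 < ∑ i, X i * exp (t * u i) :=
  (exp_pos _).trans_le (exp_mul_dotProduct_le_sum_mul_exp hX hX₁ t u)

lemma mul_dotProduct_le_log_sum_mul_exp (t : ℝ) (u : ι → ℝ) :
    t * (X ⬝ᵥ u) ≤ log (∑ i, X i * exp (t * u i)) :=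
  (le_log_iff_exp_le (sum_mul_exp_pos hX hX₁ t u)).2 (exp_mul_dotProduct_le_sum_mul_exp hX hX₁ t u)

lemma log_sum_mul_exp_le {u : ι → ℝ} {t M : ℝ} (hM : 0 < M) (hu₀ : ∀ i, 0 ≤ u i)
    (huM : ∀ i, u i ≤ M) :
    log (∑ i, X i * exp (t * u i)) ≤ t * (X ⬝ᵥ u) + (exp (t * M) - 1 - t * M) := by
  set p := X ⬝ᵥ u
  have hpM : p ≤ M := calc
    p ≤ ∑ i, X i * M := sum_le_sum fun i _ => mul_le_mul_of_nonneg_left (huM i) (hX i)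
    _ = M := by rw [← sum_mul, hX₁, one_mul]
  have hchord : ∑ i, X i * exp (t * u i) ≤ 1 + p / M * (exp (t * M) - 1) := calc
    ∑ i, X i * exp (t * u i) ≤ ∑ i, X i * (1 + u i / M * (exp (t * M) - 1)) := by
      refine sum_le_sum fun i _ => mul_le_mul_of_nonneg_left ?_ (hX i)
      have h := exp_mul_le_one_add_mul_exp_sub_one (div_nonneg (hu₀ i) hM.le)
        ((div_le_one hM).2 (huM i)) (t * M)
      rwa [show u i / M * (t * M) = t * u i by field_simp] at h
    _ = 1 + p / M * (exp (t * M) - 1) := by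
      simp only [mul_add, mul_one, sum_add_distrib, hX₁, p, dotProduct, sum_div, sum_mul]
      exact congrArg _ (sum_congr rfl fun i _ => by ring)
  have hc : 0 ≤ exp (t * M) - 1 - t * M := by linarith [add_one_le_exp (t * M)]
  calc log (∑ i, X i * exp (t * u i))
      ≤ ∑ i, X i * exp (t * u i) - 1 := log_le_sub_one_of_pos (sum_mul_exp_pos hX hX₁ t u)
    _ ≤ p / M * (exp (t * M) - 1) := by linarith
    _ = t * p + p / M * (exp (t * M) - 1 - t * M) := by field_simp; ring
    _ ≤ t * p + (exp (t * M) - 1 - t * M) := by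
      gcongr; exact mul_le_of_le_one_left hc ((div_le_one hM).2 hpM)

end ProbabilityVector

lemma summable_exp_mul_sub_one_sub_mul {a : ℕ → ℝ} (ha : ∀ k, 0 ≤ a k)
    (ha₀ : Tendsto a atTop (𝓝 0)) (hs : Summable fun k => a k * (exp (a k) - 1)) (M : ℝ) :
    Summable fun k => exp (a k * M) - 1 - a k * M := by
  have hsmall : ∀ᶠ k in atTop, |a k * M| ≤ 1 := by
    have h : Tendsto (fun k => |a k * M|) atTop (𝓝 0) := by simpa using (ha₀.mul_const M).abs
    exact h.eventually (eventually_le_nhds one_pos)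
  refine (hs.mul_left (M ^ 2)).of_norm_bounded_eventually_nat ?_
  filter_upwards [hsmall] with k hk
  calc ‖exp (a k * M) - 1 - a k * M‖ ≤ (a k * M) ^ 2 := abs_exp_sub_one_sub_id_le hk
    _ = M ^ 2 * (a k * a k) := by ring
    _ ≤ M ^ 2 * (a k * (exp (a k) - 1)) := by
      gcongr
      · exact ha k
      · linarith [add_one_le_exp (a k)]

section Matrix

variable {m ι : Type*} [Fintype ι] {C : Matrix m ι ℝ} (hC : ∀ i j, 0 ≤ C i j) {X : ι → ℝ}
include hC

lemma mulVec_nonneg_of_nonneg (hX : ∀ j, 0 ≤ X j) (i : m) : 0 ≤ (C *ᵥ X) i :=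
  sum_nonneg fun j _ => mul_nonneg (hC i j) (hX j)

lemma mulVec_le_sum_entries [Fintype m] (hX : ∀ j, 0 ≤ X j) (hX₁ : ∑ j, X j = 1) (i : m) :
    (C *ᵥ X) i ≤ ∑ i, ∑ j, C i j := calc
  (C *ᵥ X) i ≤ ∑ j, C i j := sum_le_sum fun j _ => mul_le_of_le_one_right (hC i j)
    (hX₁ ▸ single_le_sum (fun j _ => hX j) (mem_univ j))
  _ ≤ ∑ i, ∑ j, C i j :=
    single_le_sum (fun i _ => sum_nonneg fun j _ => hC i j) (mem_univ i)

end Matrix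

section Hedge

variable {n : ℕ} (C : Matrix (Fin n) (Fin n) ℝ)

def hedgeNormalizer (t : ℝ) (X : Fin n → ℝ) : ℝ :=
  ∑ j, X j * exp (t * (C *ᵥ X) j)

variable {C} {X : Fin n → ℝ}

lemma isInteriorPt.univ_nonempty (hX : isInteriorPt X) : (univ : Finset (Fin n)).Nonempty :=
  nonempty_of_sum_ne_zero (hX.2 ▸ one_ne_zero)

lemma isInteriorPt.le_one (hX : isInteriorPt X) (i : Fin n) : X i ≤ 1 :=
  hX.2 ▸ single_le_sum (fun j _ => (hX.1 j).le) (mem_univ i)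

lemma isInteriorPt.hedgeNormalizer_pos (hX : isInteriorPt X) (t : ℝ) :
    0 < hedgeNormalizer C t X :=
  sum_mul_exp_pos (fun i => (hX.1 i).le) hX.2 t _

lemma isInteriorPt.hedge (hX : isInteriorPt X) (t : ℝ) : isInteriorPt (hedge C t X) := by
  have hZ := hX.hedgeNormalizer_pos (C := C) t
  refine ⟨fun i => div_pos (mul_pos (hX.1 i) (exp_pos _)) hZ, ?_⟩
  simp only [_root_.hedge, ← sum_div]
  exact div_self hZ.ne'

lemma log_hedge (hX : isInteriorPt X) (t : ℝ) (i : Fin n) :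
    log (hedge C t X i) = log (X i) + t * (C *ᵥ X) i - log (hedgeNormalizer C t X) := by
  change log (X i * exp (t * (C *ᵥ X) i) / hedgeNormalizer C t X) = _
  rw [log_div (mul_pos (hX.1 i) (exp_pos _)).ne' (hX.hedgeNormalizer_pos t).ne',
    log_mul (hX.1 i).ne' (exp_pos _).ne', log_exp]

lemma mul_dotProduct_le_log_hedgeNormalizer (hX : isInteriorPt X) (t : ℝ) :
    t * (X ⬝ᵥ C *ᵥ X) ≤ log (hedgeNormalizer C t X) :=
  mul_dotProduct_le_log_sum_mul_exp (fun i => (hX.1 i).le) hX.2 t _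

variable (C) (a : ℕ → ℝ) {X0 : Fin n → ℝ}

lemma isInteriorPt_hiter (hX0 : isInteriorPt X0) : ∀ k, isInteriorPt (hiter C a X0 k)
  | 0 => hX0
  | k + 1 => (isInteriorPt_hiter hX0 k).hedge (a k)

lemma log_hiter (hX0 : isInteriorPt X0) (K : ℕ) (i : Fin n) :
    log (hiter C a X0 K i) = log (X0 i) + ∑ k ∈ range K,
      (a k * (C *ᵥ hiter C a X0 k) i - log (hedgeNormalizer C (a k) (hiter C a X0 k))) := by
  induction K with
  | zero => simp [hiter]
  | succ K ih =>
    rw [sum_range_succ, ← add_assoc, ← ih, add_sub_assoc']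
    exact log_hedge (isInteriorPt_hiter C a hX0 K) (a K) i

lemma mulVec_wavg (K : ℕ) (i : Fin n) :
    (C *ᵥ wavg C a X0 K) i
      = (pSum a K)⁻¹ * ∑ k ∈ range (K + 1), a k * (C *ᵥ hiter C a X0 k) i := by
  simp [wavg, mulVec_smul, mulVec_sum]

variable {K : ℕ}

lemma sum_log_hedgeNormalizer_le_pSum_mul_cmax (hX0 : isInteriorPt X0) (hA : 0 < pSum a K) :
    ∑ k ∈ range (K + 1), log (hedgeNormalizer C (a k) (hiter C a X0 k))
      ≤ pSum a K * cmax C (wavg C a X0 K) := by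
  obtain ⟨i, -, hi⟩ : ∃ i ∈ univ, X0 i ≤ hiter C a X0 (K + 1) i :=
    exists_le_of_sum_le hX0.univ_nonempty (by rw [hX0.2, (isInteriorPt_hiter C a hX0 (K + 1)).2])
  have hlog := log_le_log (hX0.1 i) hi
  rw [log_hiter C a hX0, sum_sub_distrib] at hlog
  calc _ ≤ ∑ k ∈ range (K + 1), a k * (C *ᵥ hiter C a X0 k) i := by linarith
    _ = pSum a K * (C *ᵥ wavg C a X0 K) i := by rw [mulVec_wavg C a, mul_inv_cancel_left₀ hA.ne']
    _ ≤ pSum a K * cmax C (wavg C a X0 K) :=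
      mul_le_mul_of_nonneg_left (le_ciSup (Set.finite_range _).bddAbove i) hA.le

lemma pSum_mul_cmax_le (hX0 : isInteriorPt X0) (hA : 0 < pSum a K) :
    pSum a K * cmax C (wavg C a X0 K)
      ≤ ∑ k ∈ range (K + 1), log (hedgeNormalizer C (a k) (hiter C a X0 k))
        + ∑ i, -log (X0 i) := by
  have : Nonempty (Fin n) := univ_nonempty_iff.mp hX0.univ_nonempty
  rw [mul_comm, ← le_div_iff₀ hA]
  refine ciSup_le fun i => ?_
  rw [mulVec_wavg C a, div_eq_inv_mul]
  gcongr
  have hX := isInteriorPt_hiter C a hX0 (K + 1)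
  have hlog := log_nonpos (hX.1 i).le (hX.le_one i)
  rw [log_hiter C a hX0, sum_sub_distrib] at hlog
  have hR : -log (X0 i) ≤ ∑ j, -log (X0 j) :=
    single_le_sum (fun j _ => neg_nonneg.2 (log_nonpos (hX0.1 j).le (hX0.le_one j))) (mem_univ i)
  linarith

lemma exists_sum_log_hedgeNormalizer_le (hC : ∀ i j, 0 ≤ C i j) (ha : ∀ k, 0 ≤ a k)
    (ha₀ : Tendsto a atTop (𝓝 0)) (hs : Summable fun k => a k * (exp (a k) - 1))
    (hX0 : isInteriorPt X0) :
    ∃ E, ∀ K, ∑ k ∈ range (K + 1), log (hedgeNormalizer C (a k) (hiter C a X0 k))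
      ≤ ∑ k ∈ range (K + 1), a k * (hiter C a X0 k ⬝ᵥ C *ᵥ hiter C a X0 k) + E := by
  set M := 1 + ∑ i, ∑ j, C i j
  have hM : 0 < M :=
    add_pos_of_pos_of_nonneg one_pos (sum_nonneg fun i _ => sum_nonneg fun j _ => hC i j)
  set c := fun k => exp (a k * M) - 1 - a k * M
  have hc₀ : ∀ k, 0 ≤ c k := fun k => by linarith [add_one_le_exp (a k * M)]
  have hc : Summable c := summable_exp_mul_sub_one_sub_mul ha ha₀ hs M
  refine ⟨∑' k, c k, fun K => ?_⟩
  calc _ ≤ ∑ k ∈ range (K + 1), (a k * (hiter C a X0 k ⬝ᵥ C *ᵥ hiter C a X0 k) + c k) := by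
        refine sum_le_sum fun k _ => ?_
        have hX := isInteriorPt_hiter C a hX0 k
        have hX' : ∀ i, 0 ≤ hiter C a X0 k i := fun i => (hX.1 i).le
        exact log_sum_mul_exp_le hX' hX.2 hM (mulVec_nonneg_of_nonneg hC hX') fun i =>
          (mulVec_le_sum_entries hC hX' hX.2 i).trans (le_add_of_nonneg_left zero_le_one)
    _ = _ + ∑ k ∈ range (K + 1), c k := sum_add_distrib
    _ ≤ _ := by gcongr; exact hc.sum_le_tsum _ fun k _ => hc₀ k

end Hedge

theorem stmt17_general {n : ℕ} (C : Matrix (Fin n) (Fin n) ℝ)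
    (hC : ∀ i j, 0 ≤ C i j)
    (a : ℕ → ℝ) (hapos : ∀ k, 0 < a k)
    (ha0 : Tendsto a atTop (𝓝 0))
    (hadiv : Tendsto (pSum a) atTop atTop)
    (hasum : Summable fun k => a k * (Real.exp (a k) - 1))
    (X0 : Fin n → ℝ) (hX0 : isInteriorPt X0) :
    Tendsto (fun K => cmax C (wavg C a X0 K) -
        (pSum a K)⁻¹ * ∑ k ∈ Finset.range (K + 1),
          a k * (hiter C a X0 k ⬝ᵥ C.mulVec (hiter C a X0 k)))
      atTop (𝓝 0) := by
  obtain ⟨E, hE⟩ := exists_sum_log_hedgeNormalizer_le C a hC (fun k => (hapos k).le) ha0 hasum hX0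
  set R := ∑ i, -log (X0 i)
  have hA : ∀ K, 0 < pSum a K := fun K => sum_pos (fun k _ => hapos k) nonempty_range_add_one
  have hJensen : ∀ K, ∑ k ∈ range (K + 1), a k * (hiter C a X0 k ⬝ᵥ C *ᵥ hiter C a X0 k)
      ≤ ∑ k ∈ range (K + 1), log (hedgeNormalizer C (a k) (hiter C a X0 k)) := fun K =>
    sum_le_sum fun k _ => mul_dotProduct_le_log_hedgeNormalizer (isInteriorPt_hiter C a hX0 k) _
  refine squeeze_zero (g := fun K => (pSum a K)⁻¹ * (E + R)) (fun K => ?_) (fun K => ?_) ?_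
  · exact sub_nonneg.2 ((inv_mul_le_iff₀ (hA K)).2
      ((hJensen K).trans (sum_log_hedgeNormalizer_le_pSum_mul_cmax C a hX0 (hA K))))
  · rw [sub_le_iff_le_add, ← mul_add, le_inv_mul_iff₀ (hA K)]
    linarith [pSum_mul_cmax_le C a hX0 (hA K), hE K]
  · simpa using hadiv.inv_tendsto_atTop.mul_const (E + R)

/-- (CX̄^K)_max − (1/A_K) ∑ α_k X^k·CX^k → 0. -/
theorem stmt17 {n : ℕ} (hn : 0 < n) (C : Matrix (Fin n) (Fin n) ℝ)
    (hC : ∀ i j, 0 ≤ C i j)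
    (a : ℕ → ℝ) (hapos : ∀ k, 0 < a k)
    (ha0 : Tendsto a atTop (𝓝 0))
    (hadiv : Tendsto (pSum a) atTop atTop)
    (hasum : Summable fun k => a k * (Real.exp (a k) - 1))
    (X0 : Fin n → ℝ) (hX0 : isInteriorPt X0) :
    Tendsto (fun K => cmax C (wavg C a X0 K) -
        (pSum a K)⁻¹ * ∑ k ∈ Finset.range (K + 1),
          a k * (hiter C a X0 k ⬝ᵥ C.mulVec (hiter C a X0 k)))
      atTop (𝓝 0) :=
  stmt17_general C hC a hapos ha0 hadiv hasum X0 hX0
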